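/- arXiv:1009.3102 — 4 statements merged into one kernel-verified Lean document; each statement's English description precedes it below -/
import Mathlib

section
/- Let p > 1, N ≥ 1, and let η, ξ ∈ ℝ^N satisfy |η−ξ| + |ξ| > 0. Then Φ_p(η,ξ)·η ≥ min{p−1, 2^{2−p}} (|η−ξ| + |ξ|)^{p−2} |η|². -/
/-!
With `a = η - ξ`, `s = |a|`, `t = |ξ|` and `c = a · ξ`, one has
`Φ_p(η, ξ) · η = s^{p-2} (s² + c) + t^{p-2} (c + t²)` and `|η|² = s² + 2c + t²`.
Both sides are affine in `c ∈ [-st, st]`, so it suffices to check the endpoints.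
At `c = st` the inequality reduces to `κ (s + t)^{p-1} ≤ s^{p-1} + t^{p-1}`, where
`κ = min {p - 1, 2^{2-p}}`: subadditivity of `x^{p-1}` for `p ≤ 2`, the power mean
inequality for `p ≥ 2`. At `c = -st` it reduces to `κ (s + t)^{p-2} (s - t) ≤ s^{p-1} - t^{p-1}`
for `t ≤ s`: concavity of `x^{p-1}` for `p ≤ 2`, and `(s + t) / 2 ≤ s` for `p ≥ 2`.
-/

/-- The translated p-Laplacian nonlinearity
`Φ_p(η,ξ) = |η−ξ|^{p−2}(η−ξ) + |ξ|^{p−2}ξ`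
(with the convention `|x|^{p−2}x = 0` when `x = 0`). -/
noncomputable def Phi (p : ℝ) {N : ℕ} (η ξ : EuclideanSpace ℝ (Fin N)) :
    EuclideanSpace ℝ (Fin N) :=
  (‖η - ξ‖ ^ (p - 2)) • (η - ξ) + (‖ξ‖ ^ (p - 2)) • ξ

open Real

lemma rpow_sub_two_mul_self {x p : ℝ} (hx : 0 ≤ x) (hp : 1 < p) :
    x ^ (p - 2) * x = x ^ (p - 1) := by
  rw [← rpow_add_one' hx (by linarith)]
  ring_nf

lemma add_mul_nonneg_of_abs_le {α β u c : ℝ} (hpos : 0 ≤ α + β * u) (hneg : 0 ≤ α - β * u)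
    (hc : |c| ≤ u) : 0 ≤ α + β * c := by
  obtain ⟨hlo, hhi⟩ := abs_le.mp hc
  rcases le_total 0 β with hβ | hβ <;> nlinarith

lemma mul_rpow_sub_one_mul_sub_le_rpow_sub_rpow {q s t : ℝ} (hq₀ : 0 ≤ q) (hq₁ : q ≤ 1)
    (hs : 0 < s) (ht : 0 ≤ t) : q * s ^ (q - 1) * (s - t) ≤ s ^ q - t ^ q := by
  have hbern := rpow_one_add_le_one_add_mul_self (s := t / s - 1)
    (by linarith [div_nonneg ht hs.le]) hq₀ hq₁
  rw [add_sub_cancel, div_rpow ht hs.le, div_le_iff₀ (rpow_pos_of_pos hs q)] at hbern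
  have hdiv : s ^ (q - 1) = s ^ q * s⁻¹ := rpow_sub_one hs.ne' q
  have hinv : s⁻¹ * s = 1 := inv_mul_cancel₀ hs.ne'
  linear_combination hbern + q * (s - t) * hdiv + q * s ^ q * hinv

section
variable {p s t : ℝ}

lemma min_mul_rpow_add_le_add_rpow (hp : 1 < p) (hs : 0 ≤ s) (ht : 0 ≤ t) :
    min (p - 1) (2 ^ (2 - p)) * (s + t) ^ (p - 1) ≤ s ^ (p - 1) + t ^ (p - 1) := by
  rcases le_total p 2 with hp2 | hp2
  · calc min (p - 1) (2 ^ (2 - p)) * (s + t) ^ (p - 1) ≤ 1 * (s + t) ^ (p - 1) := by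
          gcongr
          exact (min_le_left _ _).trans (by linarith)
      _ ≤ s ^ (p - 1) + t ^ (p - 1) := by
          rw [one_mul]
          exact rpow_add_le_add_rpow hs ht (by linarith) (by linarith)
  · have hmean : (s + t) ^ (p - 1) ≤ 2 ^ (p - 2) * (s ^ (p - 1) + t ^ (p - 1)) := by
      lift s to NNReal using hs
      lift t to NNReal using ht
      have := NNReal.rpow_add_le_mul_rpow_add_rpow s t (p := p - 1) (by linarith)
      rw [show p - 1 - 1 = p - 2 by ring] at this
      exact_mod_cast this
    calc min (p - 1) (2 ^ (2 - p)) * (s + t) ^ (p - 1)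
        ≤ 2 ^ (2 - p) * (2 ^ (p - 2) * (s ^ (p - 1) + t ^ (p - 1))) := by
          gcongr
          exact min_le_right _ _
      _ = s ^ (p - 1) + t ^ (p - 1) := by
          rw [← mul_assoc, ← rpow_add two_pos, sub_add_sub_cancel', sub_self, rpow_zero, one_mul]

lemma min_mul_rpow_mul_sub_le_rpow_sub_rpow (hp : 1 < p) (ht : 0 ≤ t) (hts : t ≤ s) :
    min (p - 1) (2 ^ (2 - p)) * (s + t) ^ (p - 2) * (s - t) ≤ s ^ (p - 1) - t ^ (p - 1) := by
  rcases hts.eq_or_lt with rfl | hlt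
  · simp
  have hs : 0 < s := ht.trans_lt hlt
  rcases le_total p 2 with hp2 | hp2
  · calc min (p - 1) (2 ^ (2 - p)) * (s + t) ^ (p - 2) * (s - t)
        ≤ (p - 1) * s ^ (p - 1 - 1) * (s - t) := by
          rw [sub_sub, one_add_one_eq_two]
          gcongr ?_ * ?_ * _
          · exact min_le_left _ _
          · exact rpow_le_rpow_of_nonpos hs (by linarith) (by linarith)
      _ ≤ s ^ (p - 1) - t ^ (p - 1) :=
          mul_rpow_sub_one_mul_sub_le_rpow_sub_rpow (by linarith) (by linarith) hs ht
  · have hhalf : 2 ^ (2 - p) * (s + t) ^ (p - 2) = ((s + t) / 2) ^ (p - 2) := by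
      rw [div_rpow (by linarith) zero_le_two, show 2 - p = -(p - 2) by ring,
        rpow_neg zero_le_two, div_eq_inv_mul]
    calc min (p - 1) (2 ^ (2 - p)) * (s + t) ^ (p - 2) * (s - t)
        ≤ ((s + t) / 2) ^ (p - 2) * (s - t) := by
          rw [← hhalf]
          gcongr
          exact min_le_right _ _
      _ ≤ s ^ (p - 2) * (s - t) := by
          gcongr
          linarith
      _ = s ^ (p - 1) - s ^ (p - 2) * t := by
          rw [mul_sub, rpow_sub_two_mul_self hs.le hp]
      _ ≤ s ^ (p - 1) - t ^ (p - 2) * t := by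
          gcongr
      _ = s ^ (p - 1) - t ^ (p - 1) := by
          rw [rpow_sub_two_mul_self ht hp]

lemma min_mul_rpow_mul_sub_sq_le (hp : 1 < p) (hs : 0 ≤ s) (ht : 0 ≤ t) :
    min (p - 1) (2 ^ (2 - p)) * (s + t) ^ (p - 2) * (s - t) ^ 2
      ≤ (s ^ (p - 1) - t ^ (p - 1)) * (s - t) := by
  rcases le_total t s with hts | hst
  · have := mul_le_mul_of_nonneg_right (min_mul_rpow_mul_sub_le_rpow_sub_rpow hp ht hts)
      (sub_nonneg.mpr hts)
    linear_combination this
  · have := mul_le_mul_of_nonneg_right (min_mul_rpow_mul_sub_le_rpow_sub_rpow hp hs hst)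
      (sub_nonneg.mpr hst)
    rw [add_comm t s] at this
    linear_combination this

lemma min_mul_rpow_mul_le_of_abs_le {c : ℝ} (hp : 1 < p) (hs : 0 ≤ s) (ht : 0 ≤ t)
    (hc : |c| ≤ s * t) :
    min (p - 1) (2 ^ (2 - p)) * (s + t) ^ (p - 2) * (s ^ 2 + 2 * c + t ^ 2)
      ≤ s ^ (p - 2) * (s ^ 2 + c) + t ^ (p - 2) * (c + t ^ 2) := by
  have hs₁ := rpow_sub_two_mul_self hs hp
  have ht₁ := rpow_sub_two_mul_self ht hp
  have hst₁ := rpow_sub_two_mul_self (add_nonneg hs ht) hp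
  have hplus := mul_le_mul_of_nonneg_right (min_mul_rpow_add_le_add_rpow hp hs ht)
    (add_nonneg hs ht)
  have hminus := min_mul_rpow_mul_sub_sq_le hp hs ht
  set K := min (p - 1) (2 ^ (2 - p))
  have := add_mul_nonneg_of_abs_le (α := s ^ (p - 2) * s ^ 2 + t ^ (p - 2) * t ^ 2
      - K * (s + t) ^ (p - 2) * (s ^ 2 + t ^ 2))
    (β := s ^ (p - 2) + t ^ (p - 2) - 2 * K * (s + t) ^ (p - 2))
    (by linear_combination hplus - (s + t) * (hs₁ + ht₁) + K * (s + t) * hst₁)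
    (by linear_combination hminus - (s - t) * (hs₁ - ht₁)) hc
  linear_combination this

end

theorem phi_inner_lower_bound_general (p : ℝ) (hp : 1 < p) (N : ℕ)
    (η ξ : EuclideanSpace ℝ (Fin N)) :
    min (p - 1) (2 ^ (2 - p)) * (‖η - ξ‖ + ‖ξ‖) ^ (p - 2) * ‖η‖ ^ 2
      ≤ (inner ℝ (Phi p η ξ) η : ℝ) := by
  obtain ⟨a, rfl⟩ : ∃ a, η = a + ξ := ⟨η - ξ, (sub_add_cancel η ξ).symm⟩
  have hinner : inner ℝ (Phi p (a + ξ) ξ) (a + ξ)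
      = ‖a‖ ^ (p - 2) * (‖a‖ ^ 2 + inner ℝ a ξ) + ‖ξ‖ ^ (p - 2) * (inner ℝ a ξ + ‖ξ‖ ^ 2) := by
    simp only [Phi, add_sub_cancel_right, inner_add_left, inner_add_right, real_inner_smul_left,
      real_inner_self_eq_norm_sq, real_inner_comm ξ a]
    ring
  rw [add_sub_cancel_right, hinner, norm_add_sq_real]
  exact min_mul_rpow_mul_le_of_abs_le hp (norm_nonneg a) (norm_nonneg ξ)
    (abs_real_inner_le_norm a ξ)

/-- Lemma 3.1, inequality (3.1): for `p > 1` and `|η−ξ| + |ξ| > 0`,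
`Φ_p(η,ξ)·η ≥ min{p−1, 2^{2−p}} (|η−ξ| + |ξ|)^{p−2} |η|²`. -/
theorem phi_inner_lower_bound (p : ℝ) (hp : 1 < p) (N : ℕ) (hN : 1 ≤ N)
    (η ξ : EuclideanSpace ℝ (Fin N)) (h : 0 < ‖η - ξ‖ + ‖ξ‖) :
    min (p - 1) (2 ^ (2 - p)) * (‖η - ξ‖ + ‖ξ‖) ^ (p - 2) * ‖η‖ ^ 2
      ≤ (inner ℝ (Phi p η ξ) η : ℝ) :=
  phi_inner_lower_bound_general p hp N η ξ
end

section
/- Let p > 1, N ≥ 1, and let η, η′, ξ ∈ ℝ^N satisfy |η−ξ| + |η′−ξ| > 0. Then |Φ_p(η,ξ) − Φ_p(η′,ξ)| ≤ max{p−1, 2^{2−p}} (|η−ξ| + |η′−ξ|)^{p−2} |η−η′|. -/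
/-!
Write `F x = ‖x‖ ^ (p - 2) • x`, so that `Φ_p(η,ξ) - Φ_p(η',ξ) = F (η - ξ) - F (η' - ξ)`, and put
`s = ‖a‖`, `r = ‖b‖`, `C = max (p - 1) (2 ^ (2 - p))`, `K = C * (s + r) ^ (p - 2)`.
Both `‖F a - F b‖ ^ 2` and `K ^ 2 * ‖a - b‖ ^ 2` are affine in `⟪a, b⟫ ∈ [-s * r, s * r]`, so it
suffices to compare them at the two endpoints, i.e. for collinear `a` and `b`. There the claim
becomes the scalar inequalities `|s ^ (p - 1) - r ^ (p - 1)| ≤ K * |s - r|` and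
`s ^ (p - 1) + r ^ (p - 1) ≤ K * (s + r)`, which follow from tangent-line bounds for
`x ↦ x ^ (p - 1)`: it is concave for `p ≤ 2` (tangent at `(s + r) / 2`, whence `2 ^ (2 - p)`) and
convex for `p ≥ 2` (whence `p - 1`).
-/

open Real

namespace Real

variable {q m x s r : ℝ}

lemma div_two_rpow (hx : 0 ≤ x) (q : ℝ) : (x / 2) ^ q = 2 ^ (-q) * x ^ q := by
  rw [div_rpow hx zero_le_two, rpow_neg zero_le_two, div_eq_inv_mul]

lemma rpow_tangent_line_eq_mul (hm : 0 < m) :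
    m ^ q + q * m ^ (q - 1) * (x - m) = m ^ q * (1 + q * (x / m - 1)) := by
  rw [rpow_sub_one hm.ne']
  field_simp

lemma rpow_eq_rpow_mul_div_rpow (hm : 0 < m) (hx : 0 ≤ x) : x ^ q = m ^ q * (x / m) ^ q := by
  rw [div_rpow hx hm.le, mul_div_cancel₀ _ (rpow_pos_of_pos hm q).ne']

lemma two_mul_two_rpow_neg (q : ℝ) : 2 * (2 : ℝ) ^ (-q) = 2 ^ (1 - q) := by
  rw [sub_eq_add_neg, rpow_add two_pos, rpow_one]

lemma rpow_le_tangent_line (hq₀ : 0 ≤ q) (hq₁ : q ≤ 1) (hm : 0 < m) (hx : 0 ≤ x) :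
    x ^ q ≤ m ^ q + q * m ^ (q - 1) * (x - m) := by
  have hy : -1 ≤ x / m - 1 := by linarith [div_nonneg hx hm.le]
  rw [rpow_tangent_line_eq_mul hm, rpow_eq_rpow_mul_div_rpow hm hx]
  gcongr
  simpa using rpow_one_add_le_one_add_mul_self hy hq₀ hq₁

lemma tangent_line_le_rpow (hq : 1 ≤ q) (hm : 0 < m) (hx : 0 ≤ x) :
    m ^ q + q * m ^ (q - 1) * (x - m) ≤ x ^ q := by
  have hy : -1 ≤ x / m - 1 := by linarith [div_nonneg hx hm.le]
  rw [rpow_tangent_line_eq_mul hm, rpow_eq_rpow_mul_div_rpow hm hx]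
  gcongr
  simpa using one_add_mul_self_le_rpow_one_add hy hq

lemma rpow_add_rpow_le_two_rpow_mul (hq₀ : 0 ≤ q) (hq₁ : q ≤ 1) (hs : 0 ≤ s) (hr : 0 ≤ r)
    (hsr : 0 < s + r) : s ^ q + r ^ q ≤ 2 ^ (1 - q) * (s + r) ^ q := by
  have hm : 0 < (s + r) / 2 := half_pos hsr
  have hmid : s ^ q + r ^ q ≤ 2 * ((s + r) / 2) ^ q := by
    linarith [rpow_le_tangent_line hq₀ hq₁ hm hs, rpow_le_tangent_line hq₀ hq₁ hm hr]
  rwa [div_two_rpow hsr.le, ← mul_assoc, two_mul_two_rpow_neg] at hmid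

lemma rpow_sub_rpow_le_two_rpow_mul (hq₀ : 0 ≤ q) (hq₁ : q ≤ 1) (hr : 0 ≤ r) (hrs : r ≤ s)
    (hsr : 0 < s + r) : s ^ q - r ^ q ≤ 2 ^ (1 - q) * (s + r) ^ (q - 1) * (s - r) := by
  set m := (s + r) / 2 with hm_def
  have hm : 0 < m := half_pos hsr
  have htangent := rpow_le_tangent_line hq₀ hq₁ hm (hr.trans hrs)
  have hchord : m ^ (q - 1) * r ≤ r ^ q := by
    rcases hr.eq_or_lt with rfl | hr₀
    · simpa using rpow_nonneg le_rfl q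
    · have hrm : r ≤ m := by rw [hm_def]; linarith
      calc m ^ (q - 1) * r ≤ r ^ (q - 1) * r :=
            mul_le_mul_of_nonneg_right (rpow_le_rpow_of_nonpos hr₀ hrm (by linarith)) hr
        _ = r ^ q := by rw [rpow_sub_one hr₀.ne', div_mul_cancel₀ _ hr₀.ne']
  have hmq : m ^ q = m ^ (q - 1) * m := by rw [rpow_sub_one hm.ne', div_mul_cancel₀ _ hm.ne']
  calc s ^ q - r ^ q ≤ m ^ (q - 1) * (m + q * (s - m) - r) := by rw [hmq] at htangent; linarith
    _ = m ^ (q - 1) * ((1 + q) / 2 * (s - r)) := by ring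
    _ ≤ m ^ (q - 1) * (s - r) := by
        gcongr
        nlinarith
    _ = 2 ^ (1 - q) * (s + r) ^ (q - 1) * (s - r) := by rw [div_two_rpow hsr.le, neg_sub]

lemma rpow_sub_rpow_le_mul (hq : 1 ≤ q) (hr : 0 ≤ r) (hrs : r ≤ s) (hsr : 0 < s + r) :
    s ^ q - r ^ q ≤ q * (s + r) ^ (q - 1) * (s - r) := by
  have hs : 0 < s := by linarith
  have htangent := tangent_line_le_rpow hq hs hr
  calc s ^ q - r ^ q ≤ q * s ^ (q - 1) * (s - r) := by linarith
    _ ≤ q * (s + r) ^ (q - 1) * (s - r) := by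
        gcongr
        linarith

variable {p : ℝ}

lemma rpow_add_rpow_le_max (hp : 1 < p) (hs : 0 ≤ s) (hr : 0 ≤ r) (hsr : 0 < s + r) :
    s ^ (p - 1) + r ^ (p - 1) ≤ max (p - 1) (2 ^ (2 - p)) * (s + r) ^ (p - 1) := by
  rcases le_total p 2 with hp₂ | hp₂
  · calc s ^ (p - 1) + r ^ (p - 1) ≤ 2 ^ (2 - p) * (s + r) ^ (p - 1) := by
          simpa [show 1 - (p - 1) = 2 - p by ring] using
            rpow_add_rpow_le_two_rpow_mul (q := p - 1) (by linarith) (by linarith) hs hr hsr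
      _ ≤ _ := by gcongr; exact le_max_right _ _
  · calc s ^ (p - 1) + r ^ (p - 1) ≤ 1 * (s + r) ^ (p - 1) := by
          simpa using add_rpow_le_rpow_add hs hr (by linarith)
      _ ≤ _ := by gcongr; exact le_max_of_le_left (by linarith)

lemma rpow_sub_rpow_le_max (hp : 1 < p) (hr : 0 ≤ r) (hrs : r ≤ s) (hsr : 0 < s + r) :
    s ^ (p - 1) - r ^ (p - 1) ≤ max (p - 1) (2 ^ (2 - p)) * (s + r) ^ (p - 2) * (s - r) := by
  rcases le_total p 2 with hp₂ | hp₂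
  · calc s ^ (p - 1) - r ^ (p - 1) ≤ 2 ^ (2 - p) * (s + r) ^ (p - 2) * (s - r) := by
          simpa [show 1 - (p - 1) = 2 - p by ring, show p - 1 - 1 = p - 2 by ring] using
            rpow_sub_rpow_le_two_rpow_mul (q := p - 1) (by linarith) (by linarith) hr hrs hsr
      _ ≤ _ := by gcongr; exact le_max_right _ _
  · calc s ^ (p - 1) - r ^ (p - 1) ≤ (p - 1) * (s + r) ^ (p - 2) * (s - r) := by
          simpa [show p - 1 - 1 = p - 2 by ring] using
            rpow_sub_rpow_le_mul (q := p - 1) (by linarith) hr hrs hsr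
      _ ≤ _ := by gcongr; exact le_max_left _ _

lemma abs_rpow_sub_rpow_le_max (hp : 1 < p) (hs : 0 ≤ s) (hr : 0 ≤ r) (hsr : 0 < s + r) :
    |s ^ (p - 1) - r ^ (p - 1)| ≤ max (p - 1) (2 ^ (2 - p)) * (s + r) ^ (p - 2) * |s - r| := by
  wlog hrs : r ≤ s generalizing s r
  · rw [abs_sub_comm, abs_sub_comm s, add_comm]
    exact this hr hs (by linarith) (by linarith)
  have hmono : r ^ (p - 1) ≤ s ^ (p - 1) := rpow_le_rpow hr hrs (by linarith)
  rw [abs_of_nonneg (sub_nonneg.2 hmono), abs_of_nonneg (sub_nonneg.2 hrs)]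
  exact rpow_sub_rpow_le_max hp hr hrs hsr

end Real

section InnerProductSpace

variable {E : Type*} [NormedAddCommGroup E] [InnerProductSpace ℝ E]

lemma norm_smul_sub_smul_le_of_abs_le {a b : E} {α β K : ℝ} (hK : 0 ≤ K)
    (hdiff : |α * ‖a‖ - β * ‖b‖| ≤ K * |‖a‖ - ‖b‖|)
    (hsum : |α * ‖a‖ + β * ‖b‖| ≤ K * (‖a‖ + ‖b‖)) :
    ‖α • a - β • b‖ ≤ K * ‖a - b‖ := by
  have hdiff₂ : (α * ‖a‖ - β * ‖b‖) ^ 2 ≤ (K * (‖a‖ - ‖b‖)) ^ 2 := by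
    rw [sq_le_sq, abs_mul, abs_of_nonneg hK]
    exact hdiff
  have hsum₂ : (α * ‖a‖ + β * ‖b‖) ^ 2 ≤ (K * (‖a‖ + ‖b‖)) ^ 2 := by
    rw [sq_le_sq, abs_mul, abs_of_nonneg hK, abs_of_nonneg (by positivity : 0 ≤ ‖a‖ + ‖b‖)]
    exact hsum
  have hinner := abs_le.1 (abs_real_inner_le_norm a b)
  have hlhs : ‖α • a - β • b‖ ^ 2 =
      α ^ 2 * ‖a‖ ^ 2 - 2 * (α * β) * inner ℝ a b + β ^ 2 * ‖b‖ ^ 2 := by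
    rw [norm_sub_sq_real, norm_smul, norm_smul, real_inner_smul_left, real_inner_smul_right,
      Real.norm_eq_abs, Real.norm_eq_abs, mul_pow, mul_pow, sq_abs, sq_abs]
    ring
  refine le_of_sq_le_sq ?_ (by positivity)
  rw [hlhs, mul_pow, norm_sub_sq_real]
  rcases le_total (α * β) (K ^ 2) with hαβ | hαβ
  · nlinarith [mul_nonneg (sub_nonneg.2 hαβ) (sub_nonneg.2 hinner.2)]
  · nlinarith [mul_nonneg (sub_nonneg.2 hαβ) (neg_le_iff_add_nonneg.1 hinner.1)]

lemma norm_rpow_smul_sub_rpow_smul_le {p : ℝ} (hp : 1 < p) (a b : E) (h : 0 < ‖a‖ + ‖b‖) :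
    ‖‖a‖ ^ (p - 2) • a - ‖b‖ ^ (p - 2) • b‖
      ≤ max (p - 1) (2 ^ (2 - p)) * (‖a‖ + ‖b‖) ^ (p - 2) * ‖a - b‖ := by
  have hpow : ∀ x : ℝ, 0 ≤ x → x ^ (p - 2) * x = x ^ (p - 1) := fun x hx ↦ by
    rw [← rpow_add_one' hx (by linarith)]
    ring_nf
  refine norm_smul_sub_smul_le_of_abs_le (by positivity) ?_ ?_
  · rw [hpow _ (norm_nonneg a), hpow _ (norm_nonneg b)]
    exact abs_rpow_sub_rpow_le_max hp (norm_nonneg a) (norm_nonneg b) h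
  · rw [hpow _ (norm_nonneg a), hpow _ (norm_nonneg b), mul_assoc, hpow _ h.le,
      abs_of_nonneg (by positivity)]
    exact rpow_add_rpow_le_max hp (norm_nonneg a) (norm_nonneg b) h

end InnerProductSpace

theorem phi_difference_norm_upper_bound_general (p : ℝ) (hp : 1 < p) (N : ℕ)
    (η η' ξ : EuclideanSpace ℝ (Fin N)) (h : 0 < ‖η - ξ‖ + ‖η' - ξ‖) :
    ‖Phi p η ξ - Phi p η' ξ‖
      ≤ max (p - 1) (2 ^ (2 - p)) * (‖η - ξ‖ + ‖η' - ξ‖) ^ (p - 2) * ‖η - η'‖ := by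
  have hPhi : Phi p η ξ - Phi p η' ξ
      = ‖η - ξ‖ ^ (p - 2) • (η - ξ) - ‖η' - ξ‖ ^ (p - 2) • (η' - ξ) := by
    unfold Phi
    abel
  rw [hPhi, ← sub_sub_sub_cancel_right η η' ξ]
  exact norm_rpow_smul_sub_rpow_smul_le hp _ _ h

/-- Lemma 3.1, inequality (3.4): for `p > 1` and `|η−ξ| + |η′−ξ| > 0`,
`|Φ_p(η,ξ) − Φ_p(η′,ξ)| ≤ max{p−1, 2^{2−p}} (|η−ξ| + |η′−ξ|)^{p−2} |η−η′|`. -/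
theorem phi_difference_norm_upper_bound (p : ℝ) (hp : 1 < p) (N : ℕ) (hN : 1 ≤ N)
    (η η' ξ : EuclideanSpace ℝ (Fin N)) (h : 0 < ‖η - ξ‖ + ‖η' - ξ‖) :
    ‖Phi p η ξ - Phi p η' ξ‖
      ≤ max (p - 1) (2 ^ (2 - p)) * (‖η - ξ‖ + ‖η' - ξ‖) ^ (p - 2) * ‖η - η'‖ :=
  phi_difference_norm_upper_bound_general p hp N η η' ξ h
end

section
/- Let p > 1, N ≥ 1, and η, ξ ∈ ℝ^N. Then min{1, p−1} |η|² ∫₀¹ |tη − ξ|^{p−2} dt ≤ Φ_p(η,ξ)·η ≤ max{1, p−1} |η|² ∫₀¹ |tη − ξ|^{p−2} dt, where for 1 < p < 2 the integrand is extended by 0 at any t with tη = ξ (the integral is finite since p − 2 > −1). -/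
open MeasureTheory Set
open scoped RealInnerProductSpace

lemma min_one_sub_one_mul_le {p c B : ℝ} (hc : 0 ≤ c) (hcB : c ≤ B) :
    min 1 (p - 1) * B ≤ (p - 2) * c + B := by
  rcases le_total p 2 with hp | hp
  · rw [min_eq_right (by linarith)]
    nlinarith
  · rw [min_eq_left (by linarith)]
    nlinarith

lemma add_le_max_one_sub_one_mul {p c B : ℝ} (hc : 0 ≤ c) (hcB : c ≤ B) :
    (p - 2) * c + B ≤ max 1 (p - 1) * B := by
  rcases le_total p 2 with hp | hp
  · rw [max_eq_left (by linarith)]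
    nlinarith
  · rw [max_eq_right (by linarith)]
    nlinarith

lemma intervalIntegrable_abs_rpow {r : ℝ} (hr : -1 < r) (a b : ℝ) :
    IntervalIntegrable (fun x => |x| ^ r) volume a b := by
  have hpos : ∀ c, 0 ≤ c → IntervalIntegrable (fun x => |x| ^ r) volume 0 c := by
    intro c hc
    have h := intervalIntegral.intervalIntegrable_rpow' (a := 0) (b := c) hr
    rw [intervalIntegrable_iff, uIoc_of_le hc] at h ⊢
    exact h.congr_fun (fun x hx => by rw [abs_of_pos hx.1]) measurableSet_Ioc
  have hzero : ∀ c, IntervalIntegrable (fun x => |x| ^ r) volume 0 c := by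
    intro c
    rcases le_total 0 c with hc | hc
    · exact hpos c hc
    · rw [IntervalIntegrable.iff_comp_neg, neg_zero]
      simpa only [abs_neg] using hpos (-c) (by linarith)
  exact (hzero a).symm.trans (hzero b)

variable {E : Type*} [NormedAddCommGroup E] [InnerProductSpace ℝ E]

lemma norm_rpow_mul_inner_sq_le (r : ℝ) (x y : E) :
    ‖x‖ ^ (r - 2) * ⟪x, y⟫ ^ 2 ≤ ‖y‖ ^ 2 * ‖x‖ ^ r := by
  rcases eq_or_ne x 0 with rfl | hx
  · rw [inner_zero_left, zero_pow two_ne_zero, mul_zero]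
    positivity
  have hx' : 0 < ‖x‖ := norm_pos_iff.2 hx
  have hCS : ⟪x, y⟫ ^ 2 ≤ ‖x‖ ^ 2 * ‖y‖ ^ 2 := by
    rw [← mul_pow, sq_le_sq, abs_mul, abs_norm, abs_norm]
    exact abs_real_inner_le_norm x y
  calc ‖x‖ ^ (r - 2) * ⟪x, y⟫ ^ 2 ≤ ‖x‖ ^ (r - 2) * (‖x‖ ^ 2 * ‖y‖ ^ 2) := by gcongr
    _ = ‖y‖ ^ 2 * ‖x‖ ^ r := by
      rw [Real.rpow_sub hx', Real.rpow_two]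
      field_simp

lemma continuous_norm_rpow_smul {r : ℝ} (hr : -1 < r) : Continuous fun x : E => ‖x‖ ^ r • x := by
  refine continuous_iff_continuousAt.2 fun x => ?_
  rcases eq_or_ne x 0 with rfl | hx
  · have hnorm : ∀ z : E, ‖‖z‖ ^ r • z‖ = ‖z‖ ^ (r + 1) := fun z => by
      rw [norm_smul, Real.norm_of_nonneg (by positivity),
        Real.rpow_add_one' (norm_nonneg z) (by linarith)]
    have hlim : ContinuousAt (fun z : E => ‖z‖ ^ (r + 1)) 0 :=
      continuous_norm.continuousAt.rpow_const (Or.inr (by linarith))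
    rw [ContinuousAt, smul_zero, tendsto_zero_iff_norm_tendsto_zero]
    simpa [hnorm, Real.zero_rpow (by linarith : r + 1 ≠ 0)] using hlim.tendsto
  · exact (continuous_norm.continuousAt.rpow_const (Or.inl (norm_ne_zero_iff.2 hx))).smul
      continuousAt_id

lemma HasDerivAt.norm_rpow {u : ℝ → E} {u' : E} {t : ℝ} (r : ℝ) (hu : HasDerivAt u u' t)
    (h0 : u t ≠ 0) :
    HasDerivAt (fun s => ‖u s‖ ^ r) (r * ‖u t‖ ^ (r - 2) * ⟪u t, u'⟫) t := by
  have hsq : ∀ s, ‖u s‖ ^ r = (‖u s‖ ^ 2) ^ (r / 2) := fun s => by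
    rw [← Real.rpow_natCast_mul (norm_nonneg _)]
    ring_nf
  have h := hu.norm_sq.rpow_const (p := r / 2) (Or.inl (by positivity))
  simp only [← hsq] at h
  convert h using 1
  rw [← Real.rpow_natCast_mul (norm_nonneg _)]
  ring_nf

lemma hasDerivAt_inner_norm_rpow_smul_affine (r : ℝ) (η ξ : E) {t : ℝ} (h0 : t • η - ξ ≠ 0) :
    HasDerivAt (fun s : ℝ => ⟪‖s • η - ξ‖ ^ r • (s • η - ξ), η⟫)
      (r * (‖t • η - ξ‖ ^ (r - 2) * ⟪t • η - ξ, η⟫ ^ 2) + ‖η‖ ^ 2 * ‖t • η - ξ‖ ^ r) t := by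
  have hu : HasDerivAt (fun s : ℝ => s • η - ξ) η t := by
    simpa using ((hasDerivAt_id t).smul_const η).sub_const ξ
  simp only [real_inner_smul_left]
  refine ((hu.norm_rpow r h0).mul (hu.inner ℝ (hasDerivAt_const t η))).congr_deriv ?_
  rw [inner_zero_right, zero_add, real_inner_self_eq_norm_sq]
  ring

lemma intervalIntegrable_norm_smul_sub_rpow {r : ℝ} (hr : -1 < r) (η ξ : E) (a b : ℝ) :
    IntervalIntegrable (fun t => ‖t • η - ξ‖ ^ r) volume a b := by
  by_cases hline : ∃ t₀ : ℝ, ξ = t₀ • η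
  · obtain ⟨t₀, rfl⟩ := hline
    have h := ((intervalIntegrable_abs_rpow hr (a - t₀) (b - t₀)).comp_sub_right t₀).mul_const
      (‖η‖ ^ r)
    simp only [sub_add_cancel] at h
    refine h.congr fun t _ => ?_
    simp only [← sub_smul, norm_smul, Real.norm_eq_abs]
    rw [Real.mul_rpow (abs_nonneg _) (norm_nonneg _)]
  · have hu : Continuous fun t : ℝ => t • η - ξ := by fun_prop
    refine (hu.norm.rpow_const fun t => Or.inl ?_).intervalIntegrable a b
    exact norm_ne_zero_iff.2 fun h => hline ⟨t, (sub_eq_zero.1 h).symm⟩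

lemma intervalIntegrable_norm_rpow_mul_inner_sq {r : ℝ} (hr : -1 < r) (η ξ : E) (a b : ℝ) :
    IntervalIntegrable (fun t => ‖t • η - ξ‖ ^ (r - 2) * ⟪t • η - ξ, η⟫ ^ 2) volume a b := by
  have hu : Continuous fun t : ℝ => t • η - ξ := by fun_prop
  refine ((intervalIntegrable_norm_smul_sub_rpow hr η ξ a b).const_mul (‖η‖ ^ 2)).mono_fun
    ((hu.norm.measurable.pow_const _).mul
      ((hu.inner continuous_const).measurable.pow_const 2)).aestronglyMeasurable
    (ae_of_all _ fun t => ?_)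
  dsimp only
  rw [Real.norm_of_nonneg (by positivity), Real.norm_of_nonneg (by positivity)]
  exact norm_rpow_mul_inner_sq_le r _ η

theorem inner_norm_rpow_smul_add_eq_integral {r : ℝ} (hr : -1 < r) {η : E} (hη : η ≠ 0) (ξ : E) :
    ⟪‖η - ξ‖ ^ r • (η - ξ) + ‖ξ‖ ^ r • ξ, η⟫ =
      ∫ t in (0 : ℝ)..1,
        (r * (‖t • η - ξ‖ ^ (r - 2) * ⟪t • η - ξ, η⟫ ^ 2) + ‖η‖ ^ 2 * ‖t • η - ξ‖ ^ r) := by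
  have hu : Continuous fun t : ℝ => t • η - ξ := by fun_prop
  have hsing : {t : ℝ | t • η - ξ = 0}.Countable := by
    refine Subsingleton.countable fun s hs t ht => smul_left_injective ℝ hη ?_
    exact (sub_eq_zero.1 hs).trans (sub_eq_zero.1 ht).symm
  have hint := ((intervalIntegrable_norm_rpow_mul_inner_sq hr η ξ 0 1).const_mul r).add
    ((intervalIntegrable_norm_smul_sub_rpow hr η ξ 0 1).const_mul (‖η‖ ^ 2))
  rw [integral_eq_of_hasDerivAt_off_countable_of_le _ _ zero_le_one hsing
    (((continuous_norm_rpow_smul hr).comp hu).inner continuous_const).continuousOn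
    (fun t ht => hasDerivAt_inner_norm_rpow_smul_affine r η ξ ht.2) hint]
  simp [inner_add_left, sub_eq_add_neg]

theorem phi_inner_two_sided_bounds_general (p : ℝ) (hp : 1 < p) (N : ℕ)
    (η ξ : EuclideanSpace ℝ (Fin N)) :
    min 1 (p - 1) * ‖η‖ ^ 2 * (∫ t in (0 : ℝ)..1, ‖t • η - ξ‖ ^ (p - 2))
        ≤ (inner ℝ (Phi p η ξ) η : ℝ) ∧
      (inner ℝ (Phi p η ξ) η : ℝ)
        ≤ max 1 (p - 1) * ‖η‖ ^ 2 * (∫ t in (0 : ℝ)..1, ‖t • η - ξ‖ ^ (p - 2)) := by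
  rcases eq_or_ne η 0 with rfl | hη
  · simp
  have hr : -1 < p - 2 := by linarith
  have hpow := intervalIntegrable_norm_smul_sub_rpow hr η ξ 0 1
  have hint := ((intervalIntegrable_norm_rpow_mul_inner_sq hr η ξ 0 1).const_mul (p - 2)).add
    (hpow.const_mul (‖η‖ ^ 2))
  have hCS := fun t : ℝ => norm_rpow_mul_inner_sq_le (p - 2) (t • η - ξ) η
  rw [Phi, inner_norm_rpow_smul_add_eq_integral hr hη ξ, ← intervalIntegral.integral_const_mul,
    ← intervalIntegral.integral_const_mul]
  constructor
  · refine intervalIntegral.integral_mono_on zero_le_one (hpow.const_mul _) hint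
      fun t _ => ?_
    exact (mul_assoc _ _ _).trans_le (min_one_sub_one_mul_le (by positivity) (hCS t))
  · refine intervalIntegral.integral_mono_on zero_le_one hint (hpow.const_mul _)
      fun t _ => ?_
    exact (add_le_max_one_sub_one_mul (by positivity) (hCS t)).trans_eq (mul_assoc _ _ _).symm

/-- The dimension-correct two-sided form of the mean value identity (3.5):
`min{1, p−1}|η|² ∫₀¹ |tη − ξ|^{p−2} dt ≤ Φ_p(η,ξ)·η ≤ max{1, p−1}|η|² ∫₀¹ |tη − ξ|^{p−2} dt`
(for `1 < p < 2` the integrand is extended by `0` at any `t` with `tη = ξ`). -/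
theorem phi_inner_two_sided_bounds (p : ℝ) (hp : 1 < p) (N : ℕ) (hN : 1 ≤ N)
    (η ξ : EuclideanSpace ℝ (Fin N)) :
    min 1 (p - 1) * ‖η‖ ^ 2 * (∫ t in (0 : ℝ)..1, ‖t • η - ξ‖ ^ (p - 2))
        ≤ (inner ℝ (Phi p η ξ) η : ℝ) ∧
      (inner ℝ (Phi p η ξ) η : ℝ)
        ≤ max 1 (p - 1) * ‖η‖ ^ 2 * (∫ t in (0 : ℝ)..1, ‖t • η - ξ‖ ^ (p - 2)) :=
  phi_inner_two_sided_bounds_general p hp N η ξ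
end

section
/- Let γ ∈ (0,1), τ > 0, and c > 0. Let g : [0,1] → [0,∞) be Lebesgue integrable and set E(ρ) = ∫₀^ρ g(r) dr for ρ ∈ [0,1]. Assume that g(ρ) ≥ c ρ^{τ−1} E(ρ)^{1−γ} for almost every ρ ∈ (0,1). Then for every ρ ∈ [0,1], E(ρ)^γ ≤ max{0, E(1)^γ − (cγ/τ)(1 − ρ^τ)}. In particular, if ρ ∈ [0,1] satisfies ρ^τ ≤ 1 − (τ/(cγ)) E(1)^γ, then E(ρ) = 0. -/
open MeasureTheory

/-- Concavity (Bernoulli-type) inequality for `rpow`, via weighted AM-GM. -/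
lemma energy_bernoulli_aux {γ u v : ℝ} (hγ0 : 0 < γ) (hγ1 : γ < 1) (hu : 0 < u)
    (huv : u ≤ v) : γ * v ^ (γ - 1) * (v - u) ≤ v ^ γ - u ^ γ := by
  have hv : 0 < v := hu.trans_le huv
  have hgm : u ^ γ * v ^ (1 - γ) ≤ γ * u + (1 - γ) * v :=
    Real.geom_mean_le_arith_mean2_weighted hγ0.le (by linarith) hu.le hv.le (by ring)
  have hvp : 0 < v ^ (γ - 1) := Real.rpow_pos_of_pos hv _
  have h1 : v ^ (1 - γ) * v ^ (γ - 1) = 1 := by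
    rw [← Real.rpow_add hv]
    norm_num
  have h2 : v ^ (γ - 1) * v = v ^ γ := by
    have := Real.rpow_add_one hv.ne' (γ - 1)
    rw [sub_add_cancel] at this
    linarith [this]
  nlinarith [mul_le_mul_of_nonneg_right hgm hvp.le, hvp, Real.rpow_pos_of_pos hu γ]

/-- The differential-inequality (energy) lemma underlying the dead-core argument
in Proposition 3.4: if `E(ρ) = ∫₀^ρ g` with `g ≥ 0` integrable on `[0,1]` and
`g(ρ) ≥ c ρ^{τ−1} E(ρ)^{1−γ}` a.e. on `(0,1)`, then
`E(ρ)^γ ≤ max{0, E(1)^γ − (cγ/τ)(1 − ρ^τ)}` for all `ρ ∈ [0,1]`; in particular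
`E(ρ) = 0` whenever `ρ^τ ≤ 1 − (τ/(cγ)) E(1)^γ`. -/
theorem energy_dead_core (γ τ c : ℝ) (hγ0 : 0 < γ) (hγ1 : γ < 1) (hτ : 0 < τ)
    (hc : 0 < c) (g : ℝ → ℝ)
    (hg_int : IntegrableOn g (Set.Icc (0 : ℝ) 1))
    (hg_nonneg : ∀ r ∈ Set.Icc (0 : ℝ) 1, 0 ≤ g r)
    (E : ℝ → ℝ) (hE : ∀ ρ, E ρ = ∫ r in (0 : ℝ)..ρ, g r)
    (hineq : ∀ᵐ ρ ∂volume,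
      ρ ∈ Set.Ioo (0 : ℝ) 1 → c * ρ ^ (τ - 1) * E ρ ^ (1 - γ) ≤ g ρ) :
    ∀ ρ ∈ Set.Icc (0 : ℝ) 1,
      E ρ ^ γ ≤ max 0 (E 1 ^ γ - c * γ / τ * (1 - ρ ^ τ)) ∧
      (ρ ^ τ ≤ 1 - τ / (c * γ) * E 1 ^ γ → E ρ = 0) := by
  have h1γ : (0:ℝ) ≤ 1 - γ := by linarith
  -- interval integrability of `g` on subintervals of `[0,1]`
  have hII : ∀ x y : ℝ, 0 ≤ x → x ≤ y → y ≤ 1 → IntervalIntegrable g volume x y := by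
    intro x y hx hxy hy
    refine (hg_int.mono_set ?_).intervalIntegrable
    rw [Set.uIcc_of_le hxy]
    exact Set.Icc_subset_Icc hx hy
  have hEsub : ∀ x y : ℝ, 0 ≤ x → x ≤ y → y ≤ 1 → E y - E x = ∫ r in x..y, g r := by
    intro x y hx hxy hy
    rw [hE, hE, ← intervalIntegral.integral_add_adjacent_intervals
      (hII 0 x le_rfl hx (hxy.trans hy)) (hII x y hx hxy hy)]
    ring
  have hmono : ∀ x y : ℝ, 0 ≤ x → x ≤ y → y ≤ 1 → E x ≤ E y := by
    intro x y hx hxy hy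
    have h := hEsub x y hx hxy hy
    have h2 : 0 ≤ ∫ r in x..y, g r :=
      intervalIntegral.integral_nonneg hxy
        (fun u hu => hg_nonneg u ⟨hx.trans hu.1, hu.2.trans hy⟩)
    linarith
  have hE0 : E 0 = 0 := by rw [hE]; simp
  have hEnonneg : ∀ x ∈ Set.Icc (0:ℝ) 1, 0 ≤ E x := fun x hx =>
    hE0 ▸ hmono 0 x le_rfl hx.1 hx.2
  have hcont : ContinuousOn E (Set.Icc (0:ℝ) 1) := by
    have h : ContinuousOn (fun x => ∫ t in (0:ℝ)..x, g t) (Set.uIcc (0:ℝ) 1) := by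
      apply intervalIntegral.continuousOn_primitive_interval
      rwa [Set.uIcc_of_le (by norm_num : (0:ℝ) ≤ 1)]
    rw [Set.uIcc_of_le (by norm_num : (0:ℝ) ≤ 1)] at h
    exact h.congr fun x _ => hE x
  -- step inequality
  have hstep : ∀ x y : ℝ, 0 < x → x ≤ y → y ≤ 1 →
      c * E x ^ (1 - γ) * ((y ^ τ - x ^ τ) / τ) ≤ E y - E x := by
    intro x y hx hxy hy
    rw [hEsub x y hx.le hxy hy]
    have hint1 : IntervalIntegrable (fun r => c * r ^ (τ-1) * E x ^ (1-γ)) volume x y := by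
      apply ContinuousOn.intervalIntegrable
      apply ContinuousOn.mul (ContinuousOn.mul continuousOn_const ?_) continuousOn_const
      apply ContinuousOn.rpow_const continuousOn_id
      intro r hr
      rw [Set.uIcc_of_le hxy] at hr
      exact Or.inl (ne_of_gt (hx.trans_le hr.1))
    have h1 : ∀ᵐ r : ℝ ∂volume, r ≠ 1 := by
      rw [ae_iff]
      have : {a : ℝ | ¬ a ≠ 1} = {1} := by ext a; simp
      rw [this]
      exact measure_singleton 1
    have hae : (fun r => c * r ^ (τ-1) * E x ^ (1-γ)) ≤ᵐ[volume.restrict (Set.Icc x y)] g := by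
      filter_upwards [ae_restrict_mem measurableSet_Icc,
        hineq.filter_mono (ae_mono Measure.restrict_le_self),
        h1.filter_mono (ae_mono Measure.restrict_le_self)] with r hr hi h1r
      have hr0 : 0 < r := hx.trans_le hr.1
      have hr1 : r < 1 := lt_of_le_of_ne (hr.2.trans hy) h1r
      refine le_trans ?_ (hi ⟨hr0, hr1⟩)
      have hEr : E x ^ (1-γ) ≤ E r ^ (1-γ) :=
        Real.rpow_le_rpow (hEnonneg x ⟨hx.le, hxy.trans hy⟩)
          (hmono x r hx.le hr.1 (hr.2.trans hy)) h1γ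
      have hrp : 0 ≤ c * r ^ (τ-1) := mul_nonneg hc.le (Real.rpow_nonneg hr0.le _)
      exact mul_le_mul_of_nonneg_left hEr hrp
    have hmono' := intervalIntegral.integral_mono_ae_restrict hxy hint1
      (hII x y hx.le hxy hy) hae
    refine le_trans (le_of_eq ?_) hmono'
    rw [intervalIntegral.integral_mul_const, intervalIntegral.integral_const_mul,
      integral_rpow (Or.inl (by linarith : (-1:ℝ) < τ - 1)), sub_add_cancel]
    ring
  -- the key claim
  have key : ∀ ρ ∈ Set.Icc (0:ℝ) 1, 0 < E ρ →
      E ρ ^ γ + c * γ / τ * (1 - ρ ^ τ) ≤ E 1 ^ γ := by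
    intro ρ hρ hpos
    have hρ0 : 0 < ρ := by
      rcases hρ.1.lt_or_eq with h | h
      · exact h
      · exfalso; rw [← h] at hpos; rw [hE0] at hpos; exact lt_irrefl 0 hpos
    rcases hρ.2.lt_or_eq with hρ1 | hρ1
    · -- ρ < 1
      have hD : 0 ≤ E 1 ^ γ - E ρ ^ γ := by
        have := Real.rpow_le_rpow (hEnonneg ρ hρ) (hmono ρ 1 hρ.1 hρ.2 le_rfl) hγ0.le
        linarith
      have main : ∀ ε > (0:ℝ), c * γ / τ * (1 - ρ ^ τ) ≤ (1 + ε) * (E 1 ^ γ - E ρ ^ γ) := by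
        intro ε hε
        have hucont : UniformContinuousOn E (Set.Icc ρ 1) :=
          isCompact_Icc.uniformContinuousOn_of_continuous
            (hcont.mono (Set.Icc_subset_Icc hρ.1 le_rfl))
        obtain ⟨δ, hδ0, hδ⟩ := (Metric.uniformContinuousOn_iff).1 hucont (ε * E ρ)
          (mul_pos hε hpos)
        obtain ⟨n, hn⟩ := exists_nat_gt ((1 - ρ)/δ)
        have hn0 : 0 < (n:ℝ) := lt_of_le_of_lt (div_nonneg (by linarith) hδ0.le) hn
        set st := (1 - ρ)/(n:ℝ) with hst
        have hst0 : 0 < st := div_pos (by linarith) hn0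
        have hstδ : st < δ := by
          rw [hst, div_lt_iff₀ hn0]
          have := (div_lt_iff₀ hδ0).1 hn
          linarith
        have hnst : (n:ℝ) * st = 1 - ρ := by rw [hst]; field_simp
        set t : ℕ → ℝ := fun i => ρ + (i:ℝ) * st with ht
        have htmono : ∀ i : ℕ, t i ≤ t (i+1) := by
          intro i
          simp only [ht]
          push_cast
          nlinarith [hst0]
        have htdiff : ∀ i : ℕ, t (i+1) - t i = st := by
          intro i
          simp only [ht]
          push_cast
          ring
        have htmem : ∀ i ≤ n, ρ ≤ t i ∧ t i ≤ 1 := by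
          intro i hi
          have hicast : (i:ℝ) ≤ n := Nat.cast_le.2 hi
          constructor
          · simp only [ht]
            nlinarith [hst0]
          · simp only [ht]
            nlinarith [hst0]
        have htn : t n = 1 := by
          simp only [ht]
          rw [hnst]; ring
        have ht0 : t 0 = ρ := by simp [ht]
        have term : ∀ i < n, c*γ/τ * (t (i+1) ^ τ - t i ^ τ)
            ≤ (1+ε) * (E (t (i+1)) ^ γ - E (t i) ^ γ) := by
          intro i hi
          obtain ⟨hx1, hx2⟩ := htmem i hi.le
          obtain ⟨hy1, hy2⟩ := htmem (i+1) hi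
          set x := t i
          set y := t (i+1)
          have hxy : x ≤ y := htmono i
          have hx0 : 0 < x := hρ0.trans_le hx1
          have hy0 : 0 < y := hx0.trans_le hxy
          have hmu : E ρ ≤ E x := hmono ρ x hρ0.le hx1 hx2
          have hu0 : 0 < E x := lt_of_lt_of_le hpos hmu
          have huv : E x ≤ E y := hmono x y hx0.le hxy hy2
          have hv0 : 0 < E y := lt_of_lt_of_le hu0 huv
          have hvd : E y - E x < ε * E ρ := by
            have hdist := hδ y ⟨hy1, hy2⟩ x ⟨hx1, hx2⟩
              (by rw [Real.dist_eq, abs_of_nonneg (by linarith [htdiff i] : (0:ℝ) ≤ y - x)]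
                  rw [htdiff i]; exact hstδ)
            rw [Real.dist_eq, abs_of_nonneg (by linarith : (0:ℝ) ≤ E y - E x)] at hdist
            exact hdist
          have hvu : E y ≤ (1+ε) * E x := by nlinarith
          have hs := hstep x y hx0 hxy hy2
          have hb := energy_bernoulli_aux hγ0 hγ1 hu0 huv
          have hxyτ : x ^ τ ≤ y ^ τ := Real.rpow_le_rpow hx0.le hxy hτ.le
          have hratio : E y ^ (1-γ) ≤ (1+ε) * E x ^ (1-γ) := by
            calc E y ^ (1-γ) ≤ ((1+ε) * E x) ^ (1-γ) :=
                  Real.rpow_le_rpow hv0.le hvu h1γ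
              _ = (1+ε)^(1-γ) * E x ^(1-γ) := Real.mul_rpow (by positivity) hu0.le
              _ ≤ (1+ε) * E x ^(1-γ) := by
                  have h5 : (1+ε)^(1-γ) ≤ (1+ε)^(1:ℝ) :=
                    Real.rpow_le_rpow_of_exponent_le (by linarith) (by linarith)
                  rw [Real.rpow_one] at h5
                  exact mul_le_mul_of_nonneg_right h5 (Real.rpow_nonneg hu0.le _)
          have hv1γ : 0 < E y ^ (1-γ) := Real.rpow_pos_of_pos hv0 _
          have hA : E y ^ (γ-1) = (E y ^ (1-γ))⁻¹ := by
            rw [show γ-1 = -(1-γ) by ring, Real.rpow_neg hv0.le]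
          have hone : 1 ≤ (1+ε) * E x ^ (1-γ) * E y ^ (γ-1) := by
            rw [hA, ← div_eq_mul_inv, le_div_iff₀ hv1γ, one_mul]
            exact hratio
          have hc1 : 0 ≤ (y^τ - x^τ)/τ := div_nonneg (by linarith) hτ.le
          have step2 : γ * E y ^ (γ-1) * (c * E x ^ (1-γ) * ((y^τ - x^τ)/τ))
              ≤ E y ^ γ - E x ^ γ := by
            refine le_trans ?_ hb
            have hk : 0 ≤ γ * E y ^ (γ-1) :=
              mul_nonneg hγ0.le (Real.rpow_nonneg hv0.le _)
            exact mul_le_mul_of_nonneg_left hs hk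
          have step3 := mul_le_mul_of_nonneg_left step2
            (by linarith : (0:ℝ) ≤ 1+ε)
          refine le_trans ?_ step3
          have step4 := mul_le_mul_of_nonneg_right hone
            (mul_nonneg (mul_nonneg hc.le hγ0.le) hc1)
          calc c*γ/τ*(y^τ - x^τ) = 1 * (c*γ*((y^τ - x^τ)/τ)) := by ring
            _ ≤ ((1+ε) * E x ^(1-γ) * E y ^(γ-1)) * (c*γ*((y^τ-x^τ)/τ)) := step4
            _ = (1+ε) * (γ * E y ^(γ-1) * (c * E x ^(1-γ) * ((y^τ-x^τ)/τ))) := by ring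
        calc c*γ/τ*(1 - ρ^τ)
            = ∑ i ∈ Finset.range n, c*γ/τ * (t (i+1)^τ - t i^τ) := by
              rw [← Finset.mul_sum, Finset.sum_range_sub (fun i => t i ^ τ), htn, ht0, Real.one_rpow]
          _ ≤ ∑ i ∈ Finset.range n, (1+ε) * (E (t (i+1))^γ - E (t i)^γ) :=
              Finset.sum_le_sum (fun i hi => term i (Finset.mem_range.1 hi))
          _ = (1+ε) * (E 1 ^ γ - E ρ ^ γ) := by
              rw [← Finset.mul_sum, Finset.sum_range_sub (fun i => E (t i) ^ γ), htn, ht0]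
      have hfin : c * γ / τ * (1 - ρ ^ τ) ≤ E 1 ^ γ - E ρ ^ γ := by
        refine le_of_forall_pos_le_add fun ε' hε' => ?_
        set D := E 1 ^ γ - E ρ ^ γ with hDdef
        have hmain := main (ε' / (D + 1)) (by positivity)
        have h3 : ε' / (D+1) * D ≤ ε' := by
          rw [div_mul_eq_mul_div, div_le_iff₀ (by positivity)]
          nlinarith
        nlinarith
      linarith
    · -- ρ = 1
      rw [hρ1, Real.one_rpow]
      simp
  -- conclusion
  intro ρ hρ
  have hEρ := hEnonneg ρ hρ
  constructor
  · rcases hEρ.lt_or_eq with hpos | hzero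
    · have := key ρ hρ hpos
      exact le_max_of_le_right (by linarith)
    · rw [← hzero, Real.zero_rpow hγ0.ne']
      exact le_max_left _ _
  · intro hρτ
    by_contra hne
    have hpos : 0 < E ρ := hEρ.lt_of_ne (fun h => hne h.symm)
    have hk := key ρ hρ hpos
    have hcγ : 0 < c * γ := mul_pos hc hγ0
    have h3 : τ / (c*γ) * E 1 ^ γ ≤ 1 - ρ ^ τ := by linarith
    have h2 : E 1 ^ γ ≤ c * γ / τ * (1 - ρ ^ τ) := by
      calc E 1 ^ γ = (c*γ/τ) * (τ/(c*γ) * E 1 ^ γ) := by field_simp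
        _ ≤ (c*γ/τ) * (1 - ρ^τ) := by
            apply mul_le_mul_of_nonneg_left h3 (by positivity)
    have h4 : E ρ ^ γ ≤ 0 := by linarith
    exact absurd h4 (not_le.2 (Real.rpow_pos_of_pos hpos γ))
end
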